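/- arXiv:2603.15817 — 2 statements merged into one kernel-verified Lean document; each statement's English description precedes it below -/
import Mathlib

section
/- Let D : 𝒵 → ℝ and, for each t, let D_t : 𝒵 → ℝ be measurable functions (interpreted as an estimating function evaluated along a regular submodel, D_t = D_k(·| β(P_{t,s}), η(P_{t,s})) and D = D_k(·|β₀,η₀)). Assume: (i, unbiasedness) E_{P_{t,s}}[D_t(Z)] = 0 for all sufficiently small t and E₀[D(Z)] = 0; (ii, continuity) ‖D_t − D‖_{L₂(P₀)} → 0 as t → 0; (iii, uniform boundedness) there exist C < ∞ and δ > 0 with |D_t(z)| ≤ C for all z ∈ 𝒵 and |t| < δ. Then t ↦ E₀[D_t(Z)] is differentiable at t = 0 with (d/dt) E₀[D_t(Z)] |_{t=0} = −E₀[D(Z) s(Z)], where s is the score of the submodel. -/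
/-! Write `r_t = √p_t` and `g_t = (r_t - r₀) / t`. Unbiasedness gives
`E₀[D_t] = ∫ D_t (r₀² - r_t²) dν`, so the difference quotient of `t ↦ E₀[D_t]` at `0`
is `-∫ D_t (r_t + r₀) g_t dν`. Quadratic mean differentiability says `g_t → s r₀ / 2`
in `L²(ν)`, hence `r_t - r₀ = t g_t → 0`; with the uniform bound on `D_t` and `D_t → D`
in `L²(P₀)` this gives `D_t (r_t + r₀) → 2 D r₀` in `L²(ν)`. By continuity of the `L²(ν)`
pairing the difference quotient tends to `-∫ D s r₀² dν = -E₀[D s]`. -/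

open MeasureTheory Filter Topology Set ENNReal

namespace Semiparam

variable {Z : Type*} [MeasurableSpace Z]

/-- `p` is a density of `P` with respect to `ν`. -/
def IsDensityOf (ν P : Measure Z) (p : Z → ℝ) : Prop :=
  P = ν.withDensity (fun z => ENNReal.ofReal (p z))

/-- A regular (QMD) parametric submodel through `P0` (which has density `p0` w.r.t. `ν`)
inside the model `model`, with score `s`. -/
structure QMDSubmodel (ν : Measure Z) (model : Set (Measure Z)) (P0 : Measure Z)
    (p0 : Z → ℝ) (s : Z → ℝ) where
  ε : ℝ
  εpos : 0 < ε
  P : ℝ → Measure Z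
  p : ℝ → Z → ℝ
  mem : ∀ t ∈ Set.Ioo (-ε) ε, P t ∈ model
  prob : ∀ t ∈ Set.Ioo (-ε) ε, IsProbabilityMeasure (P t)
  zero : P 0 = P0
  p_zero : p 0 = p0
  p_meas : ∀ t ∈ Set.Ioo (-ε) ε, Measurable (p t)
  density : ∀ t ∈ Set.Ioo (-ε) ε, IsDensityOf ν (P t) (p t)
  score_memLp : MemLp s 2 P0
  score_mean_zero : ∫ z, s z ∂P0 = 0
  qmd : Tendsto (fun t => ∫ z, ((Real.sqrt (p t z) - Real.sqrt (p0 z)) / t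
      - (1/2) * s z * Real.sqrt (p0 z)) ^ 2 ∂ν) (𝓝[≠] (0:ℝ)) (𝓝 0)

end Semiparam

theorem Real.enorm_sqrt_sq (x : ℝ) : ‖√x‖ₑ ^ 2 = ENNReal.ofReal x := by
  rw [Real.enorm_eq_ofReal (Real.sqrt_nonneg x), ← ENNReal.ofReal_pow (Real.sqrt_nonneg x),
    Real.sq_sqrt', ENNReal.ofReal_max, ENNReal.ofReal_zero, max_zero]

namespace MeasureTheory

variable {α ι E : Type*} [MeasurableSpace α] {μ : Measure α} {l : Filter ι}
  [NormedAddCommGroup E]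

theorem withDensity_ofReal_eq_withDensity_toNNReal (μ : Measure α) (p : α → ℝ) :
    μ.withDensity (fun a => ENNReal.ofReal (p a))
      = μ.withDensity fun a => ((p a).toNNReal : ℝ≥0∞) :=
  rfl

theorem MemLp.eLpNorm_two_eq_ofReal_sqrt {f : α → ℝ} (hf : MemLp f 2 μ) :
    eLpNorm f 2 μ = ENNReal.ofReal √(∫ a, f a ^ 2 ∂μ) := by
  rw [hf.eLpNorm_eq_integral_rpow_norm two_ne_zero ENNReal.ofNat_ne_top, Real.sqrt_eq_rpow]
  simp

theorem eLpNorm_one_mul_le_mul_eLpNorm_two {f g : α → ℝ} (hf : AEStronglyMeasurable f μ)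
    (hg : AEStronglyMeasurable g μ) : eLpNorm (f * g) 1 μ ≤ eLpNorm f 2 μ * eLpNorm g 2 μ := by
  have h := eLpNorm_le_eLpNorm_mul_eLpNorm_of_nnnorm (p := 2) (q := 2) (r := 1) hf hg (· * ·) 1
    (ae_of_all _ fun _ => by simp [nnnorm_mul])
  rwa [ENNReal.coe_one, one_mul] at h

theorem tendsto_integral_mul_of_tendsto_eLpNorm_two {f g : ι → α → ℝ} {f₀ g₀ : α → ℝ}
    (hf : ∀ᶠ i in l, MemLp (f i) 2 μ) (hg : ∀ᶠ i in l, MemLp (g i) 2 μ)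
    (hf₀ : MemLp f₀ 2 μ) (hg₀ : MemLp g₀ 2 μ)
    (hf_lim : Tendsto (fun i => eLpNorm (f i - f₀) 2 μ) l (𝓝 0))
    (hg_lim : Tendsto (fun i => eLpNorm (g i - g₀) 2 μ) l (𝓝 0)) :
    Tendsto (fun i => ∫ a, f i a * g i a ∂μ) l (𝓝 (∫ a, f₀ a * g₀ a ∂μ)) := by
  have hbound : ∀ᶠ i in l, eLpNorm (f i * g i - f₀ * g₀) 1 μ ≤
      eLpNorm (f i - f₀) 2 μ * (eLpNorm (g i - g₀) 2 μ + eLpNorm g₀ 2 μ)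
        + eLpNorm f₀ 2 μ * eLpNorm (g i - g₀) 2 μ := by
    filter_upwards [hf, hg] with i hfi hgi
    have hsplit : f i * g i - f₀ * g₀ = (f i - f₀) * g i + f₀ * (g i - g₀) := by ring
    calc eLpNorm (f i * g i - f₀ * g₀) 1 μ
        ≤ eLpNorm ((f i - f₀) * g i) 1 μ + eLpNorm (f₀ * (g i - g₀)) 1 μ := by
          rw [hsplit]
          exact eLpNorm_add_le ((hfi.1.sub hf₀.1).mul hgi.1) (hf₀.1.mul (hgi.1.sub hg₀.1)) le_rfl
      _ ≤ eLpNorm (f i - f₀) 2 μ * eLpNorm (g i) 2 μ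
            + eLpNorm f₀ 2 μ * eLpNorm (g i - g₀) 2 μ :=
          add_le_add (eLpNorm_one_mul_le_mul_eLpNorm_two (hfi.1.sub hf₀.1) hgi.1)
            (eLpNorm_one_mul_le_mul_eLpNorm_two hf₀.1 (hgi.1.sub hg₀.1))
      _ ≤ _ := by
          gcongr
          simpa using eLpNorm_add_le (hgi.1.sub hg₀.1) hg₀.1 one_le_two
  have hbound_lim : Tendsto (fun i => eLpNorm (f i - f₀) 2 μ * (eLpNorm (g i - g₀) 2 μ
      + eLpNorm g₀ 2 μ) + eLpNorm f₀ 2 μ * eLpNorm (g i - g₀) 2 μ) l (𝓝 0) := by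
    have h := (ENNReal.Tendsto.mul hf_lim (Or.inr (by simpa using hg₀.2.ne))
      (hg_lim.add tendsto_const_nhds) (Or.inr zero_ne_top)).add
      (ENNReal.Tendsto.const_mul hg_lim (Or.inr hf₀.2.ne))
    simpa using h
  refine tendsto_integral_of_L1' _ (hf₀.1.mul hg₀.1) ?_ ?_
  · filter_upwards [hf, hg] with i hfi hgi using hfi.integrable_mul hgi
  · exact tendsto_of_tendsto_of_tendsto_of_le_of_le' tendsto_const_nhds hbound_lim
      (Eventually.of_forall fun _ => zero_le) hbound

theorem tendsto_eLpNorm_smul_zero [NormedSpace ℝ E] {c : ι → ℝ} {f : ι → α → E} {f₀ : α → E}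
    {p : ℝ≥0∞}
    (hp : 1 ≤ p) (hc : Tendsto c l (𝓝 0)) (hf : ∀ᶠ i in l, AEStronglyMeasurable (f i) μ)
    (hf₀ : MemLp f₀ p μ) (hf_lim : Tendsto (fun i => eLpNorm (f i - f₀) p μ) l (𝓝 0)) :
    Tendsto (fun i => eLpNorm (c i • f i) p μ) l (𝓝 0) := by
  have hbound : ∀ᶠ i in l, eLpNorm (c i • f i) p μ ≤
      ‖c i‖ₑ * (eLpNorm (f i - f₀) p μ + eLpNorm f₀ p μ) := by
    filter_upwards [hf] with i hfi
    rw [eLpNorm_const_smul]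
    gcongr
    simpa using eLpNorm_add_le (hfi.sub hf₀.1) hf₀.1 hp
  have hc' : Tendsto (fun i => ‖c i‖ₑ) l (𝓝 0) := by
    simpa using hc.enorm
  have h := ENNReal.Tendsto.mul hc' (Or.inr (by simpa using hf₀.2.ne))
    (hf_lim.add tendsto_const_nhds) (Or.inr zero_ne_top)
  exact tendsto_of_tendsto_of_tendsto_of_le_of_le' tendsto_const_nhds (by simpa using h)
    (Eventually.of_forall fun _ => zero_le) hbound

theorem tendsto_eLpNorm_mul_zero_of_abs_le {w u : ι → α → ℝ} {C : ℝ} {p : ℝ≥0∞}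
    (hw : ∀ᶠ i in l, ∀ a, |w i a| ≤ C) (hu : Tendsto (fun i => eLpNorm (u i) p μ) l (𝓝 0)) :
    Tendsto (fun i => eLpNorm (w i * u i) p μ) l (𝓝 0) := by
  have hbound : ∀ᶠ i in l, eLpNorm (w i * u i) p μ ≤ ENNReal.ofReal C * eLpNorm (u i) p μ := by
    filter_upwards [hw] with i hwi
    refine eLpNorm_le_mul_eLpNorm_of_ae_le_mul (ae_of_all _ fun a => ?_) p
    simp only [Pi.mul_apply, norm_mul, Real.norm_eq_abs]
    exact mul_le_mul_of_nonneg_right (hwi a) (abs_nonneg _)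
  have h := ENNReal.Tendsto.const_mul hu (Or.inr (ofReal_ne_top (r := C)))
  exact tendsto_of_tendsto_of_tendsto_of_le_of_le' tendsto_const_nhds (by simpa using h)
    (Eventually.of_forall fun _ => zero_le) hbound

theorem memLp_of_tendsto_eLpNorm_sub {f : ι → α → E} {f₀ : α → E} {p : ℝ≥0∞} [l.NeBot]
    (hf : ∀ᶠ i in l, MemLp (f i) p μ) (hf₀ : AEStronglyMeasurable f₀ μ)
    (hf_lim : Tendsto (fun i => eLpNorm (f i - f₀) p μ) l (𝓝 0)) : MemLp f₀ p μ := by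
  obtain ⟨i, hfi, hsub⟩ := (hf.and (hf_lim.eventually (gt_mem_nhds zero_lt_one))).exists
  have : MemLp (f i - f₀) p μ := ⟨hfi.1.sub hf₀, hsub.trans one_lt_top⟩
  simpa using hfi.sub this

end MeasureTheory

namespace Semiparam

variable {Z : Type*} [MeasurableSpace Z]

namespace IsDensityOf

variable {ν P : Measure Z} {p f : Z → ℝ}

lemma eLpNorm_mul_sqrt (hP : IsDensityOf ν P p) (hp : Measurable p) (f : Z → ℝ) :
    eLpNorm (fun z => f z * √(p z)) 2 ν = eLpNorm f 2 P := by
  simp only [eLpNorm_eq_lintegral_rpow_enorm_toReal two_ne_zero ENNReal.ofNat_ne_top,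
    ENNReal.toReal_ofNat, ENNReal.rpow_two]
  rw [hP, lintegral_withDensity_eq_lintegral_mul_non_measurable _ hp.ennreal_ofReal
    (ae_of_all _ fun _ => ENNReal.ofReal_lt_top)]
  simp only [enorm_mul, mul_pow, Real.enorm_sqrt_sq, Pi.mul_apply, mul_comm]

lemma aestronglyMeasurable_mul_sqrt (hP : IsDensityOf ν P p) (hp : Measurable p)
    (hf : AEStronglyMeasurable f P) : AEStronglyMeasurable (fun z => f z * √(p z)) ν := by
  rw [hP, withDensity_ofReal_eq_withDensity_toNNReal,
    aestronglyMeasurable_withDensity_iff hp.real_toNNReal] at hf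
  -- `f √p = (p⁺ f) / √p`, with both sides `0` where `p ≤ 0`
  refine (hf.mul hp.sqrt.inv.aestronglyMeasurable).congr (ae_of_all _ fun z => ?_)
  rcases le_or_gt (p z) 0 with hz | hz
  · simp [Real.sqrt_eq_zero'.mpr hz]
  · have := Real.sqrt_pos.mpr hz
    simp only [Pi.mul_apply, Pi.inv_apply, Real.coe_toNNReal', max_eq_left hz.le, smul_eq_mul]
    field_simp
    rw [Real.sq_sqrt hz.le, mul_comm]

lemma memLp_mul_sqrt (hP : IsDensityOf ν P p) (hp : Measurable p) (hf : MemLp f 2 P) :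
    MemLp (fun z => f z * √(p z)) 2 ν :=
  ⟨hP.aestronglyMeasurable_mul_sqrt hp hf.1, by rw [hP.eLpNorm_mul_sqrt hp]; exact hf.2⟩

lemma memLp_sqrt (hP : IsDensityOf ν P p) (hp : Measurable p) [IsFiniteMeasure P] :
    MemLp (fun z => √(p z)) 2 ν := by
  simpa using hP.memLp_mul_sqrt hp (memLp_const (1 : ℝ))

lemma integral_eq (hP : IsDensityOf ν P p) (hp : Measurable p) (f : Z → ℝ) :
    ∫ z, f z ∂P = ∫ z, f z * √(p z) ^ 2 ∂ν := by
  rw [hP, withDensity_ofReal_eq_withDensity_toNNReal,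
    integral_withDensity_eq_integral_smul hp.real_toNNReal]
  simp only [NNReal.smul_def, Real.coe_toNNReal', Real.sq_sqrt', smul_eq_mul, mul_comm]

lemma integrable_mul_sqrt_sq (hP : IsDensityOf ν P p) (hp : Measurable p) (hf : Integrable f P) :
    Integrable (fun z => f z * √(p z) ^ 2) ν := by
  rw [hP, withDensity_ofReal_eq_withDensity_toNNReal,
    integrable_withDensity_iff_integrable_smul hp.real_toNNReal] at hf
  simpa only [NNReal.smul_def, Real.coe_toNNReal', Real.sq_sqrt', smul_eq_mul, mul_comm] using hf

end IsDensityOf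

namespace QMDSubmodel

variable {ν : Measure Z} {model : Set (Measure Z)} {P0 : Measure Z} {p0 s : Z → ℝ}
  (S : QMDSubmodel ν model P0 p0 s)

noncomputable def diffQuot (t : ℝ) (z : Z) : ℝ := (√(S.p t z) - √(p0 z)) / t

lemma eventually_mem_Ioo : ∀ᶠ t in 𝓝 (0 : ℝ), t ∈ Ioo (-S.ε) S.ε :=
  Ioo_mem_nhds (neg_lt_zero.mpr S.εpos) S.εpos

lemma zero_mem_Ioo : (0 : ℝ) ∈ Ioo (-S.ε) S.ε := S.eventually_mem_Ioo.self_of_nhds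

lemma measurable_p0 (S : QMDSubmodel ν model P0 p0 s) : Measurable p0 :=
  S.p_zero ▸ S.p_meas 0 S.zero_mem_Ioo

lemma isDensityOf_P0 (S : QMDSubmodel ν model P0 p0 s) : IsDensityOf ν P0 p0 := by
  simpa only [S.zero, S.p_zero] using S.density 0 S.zero_mem_Ioo

lemma isProbabilityMeasure_P0 (S : QMDSubmodel ν model P0 p0 s) : IsProbabilityMeasure P0 :=
  S.zero ▸ S.prob 0 S.zero_mem_Ioo

lemma memLp_sqrt_p {t : ℝ} (ht : t ∈ Ioo (-S.ε) S.ε) : MemLp (fun z => √(S.p t z)) 2 ν :=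
  have := S.prob t ht
  (S.density t ht).memLp_sqrt (S.p_meas t ht)

lemma memLp_sqrt_p0 (S : QMDSubmodel ν model P0 p0 s) : MemLp (fun z => √(p0 z)) 2 ν :=
  S.p_zero ▸ S.memLp_sqrt_p S.zero_mem_Ioo

lemma memLp_half_score_mul_sqrt (S : QMDSubmodel ν model P0 p0 s) :
    MemLp (fun z => 1 / 2 * s z * √(p0 z)) 2 ν :=
  S.isDensityOf_P0.memLp_mul_sqrt S.measurable_p0 (S.score_memLp.const_mul _)

lemma memLp_diffQuot {t : ℝ} (ht : t ∈ Ioo (-S.ε) S.ε) : MemLp (S.diffQuot t) 2 ν := by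
  unfold diffQuot
  simpa only [div_eq_mul_inv, Pi.sub_apply] using
    ((S.memLp_sqrt_p ht).sub S.memLp_sqrt_p0).mul_const t⁻¹

lemma tendsto_eLpNorm_diffQuot_sub :
    Tendsto (fun t => eLpNorm (S.diffQuot t - fun z => 1 / 2 * s z * √(p0 z)) 2 ν)
      (𝓝[≠] 0) (𝓝 0) := by
  have hlim : Tendsto (fun t => ENNReal.ofReal √(∫ z, (S.diffQuot t z
      - 1 / 2 * s z * √(p0 z)) ^ 2 ∂ν)) (𝓝[≠] 0) (𝓝 0) := by
    simpa [Function.comp_def, diffQuot] using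
      (ENNReal.continuous_ofReal.comp Real.continuous_sqrt).tendsto 0 |>.comp S.qmd
  refine hlim.congr' ?_
  filter_upwards [nhdsWithin_le_nhds S.eventually_mem_Ioo] with t ht
  exact (((S.memLp_diffQuot ht).sub S.memLp_half_score_mul_sqrt).eLpNorm_two_eq_ofReal_sqrt).symm

lemma tendsto_eLpNorm_sqrt_sub_sqrt :
    Tendsto (fun t => eLpNorm (fun z => √(S.p t z) - √(p0 z)) 2 ν) (𝓝[≠] 0) (𝓝 0) := by
  have h := tendsto_eLpNorm_smul_zero one_le_two
    (tendsto_id.mono_left nhdsWithin_le_nhds)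
    ((S.eventually_mem_Ioo.filter_mono nhdsWithin_le_nhds).mono fun t ht =>
      (S.memLp_diffQuot ht).1)
    S.memLp_half_score_mul_sqrt S.tendsto_eLpNorm_diffQuot_sub
  refine h.congr' ?_
  filter_upwards [self_mem_nhdsWithin] with t (ht : t ≠ 0)
  congr 1
  ext z
  simp [diffQuot, mul_div_cancel₀ _ ht]

-- At `t = 0` both sides vanish, by the convention `x / 0 = 0`.
lemma integral_div_eq_neg_integral_mul_diffQuot {t C : ℝ} (ht : t ∈ Ioo (-S.ε) S.ε)
    {f : Z → ℝ} (hf_meas : Measurable f) (hf_bdd : ∀ z, |f z| ≤ C)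
    (hf_unbiased : ∫ z, f z ∂(S.P t) = 0) :
    (∫ z, f z ∂P0) / t = -∫ z, f z * (√(S.p t z) + √(p0 z)) * S.diffQuot t z ∂ν := by
  have hint : ∀ (P : Measure Z) [IsFiniteMeasure P], Integrable f P := fun P _ =>
    .of_bound hf_meas.aestronglyMeasurable C (ae_of_all _ fun z => hf_bdd z)
  have := S.prob t ht
  have := S.isProbabilityMeasure_P0
  have hP0 := S.isDensityOf_P0
  have hPt := S.density t ht
  calc (∫ z, f z ∂P0) / t
      = (∫ z, f z * √(p0 z) ^ 2 - f z * √(S.p t z) ^ 2 ∂ν) / t := by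
        rw [integral_sub (hP0.integrable_mul_sqrt_sq S.measurable_p0 (hint P0))
          (hPt.integrable_mul_sqrt_sq (S.p_meas t ht) (hint _)),
          ← hP0.integral_eq S.measurable_p0, ← hPt.integral_eq (S.p_meas t ht), hf_unbiased,
          sub_zero]
    _ = ∫ z, (f z * √(p0 z) ^ 2 - f z * √(S.p t z) ^ 2) / t ∂ν := (integral_div _ _).symm
    _ = _ := by
        rw [← integral_neg]
        congr 1
        ext z
        simp only [diffQuot]
        ring

lemma eventually_slope_integral_eq {f : ℝ → Z → ℝ} {C : ℝ} (hf_meas : ∀ t, Measurable (f t))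
    (hf_bdd : ∀ᶠ t in 𝓝 0, ∀ z, |f t z| ≤ C)
    (hf_unbiased : ∀ᶠ t in 𝓝 0, ∫ z, f t z ∂(S.P t) = 0) :
    ∀ᶠ t in 𝓝 0, slope (fun t => ∫ z, f t z ∂P0) 0 t
      = -∫ z, f t z * (√(S.p t z) + √(p0 z)) * S.diffQuot t z ∂ν := by
  have hF0 : ∫ z, f 0 z ∂P0 = 0 := S.zero ▸ hf_unbiased.self_of_nhds
  filter_upwards [S.eventually_mem_Ioo, hf_bdd, hf_unbiased] with t ht hCt hut
  rw [slope_def_field, hF0, sub_zero, sub_zero]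
  exact S.integral_div_eq_neg_integral_mul_diffQuot ht (hf_meas t) hCt hut

lemma memLp_mul_sqrt_add_sqrt {t C : ℝ} (ht : t ∈ Ioo (-S.ε) S.ε) {f : Z → ℝ}
    (hf_meas : Measurable f) (hf_bdd : ∀ z, |f z| ≤ C) :
    MemLp (fun z => f z * (√(S.p t z) + √(p0 z))) 2 ν :=
  ((S.memLp_sqrt_p ht).add S.memLp_sqrt_p0).mul'
    (memLp_top_of_bound hf_meas.aestronglyMeasurable C (ae_of_all _ hf_bdd))

lemma tendsto_eLpNorm_mul_sqrt_add_sqrt_sub {f : ℝ → Z → ℝ} {f₀ : Z → ℝ} {C : ℝ}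
    (hf_meas : ∀ t, Measurable (f t)) (hf₀ : Measurable f₀)
    (hf_bdd : ∀ᶠ t in 𝓝 0, ∀ z, |f t z| ≤ C)
    (hf_lim : Tendsto (fun t => eLpNorm (f t - f₀) 2 P0) (𝓝[≠] 0) (𝓝 0)) :
    Tendsto (fun t => eLpNorm ((fun z => f t z * (√(S.p t z) + √(p0 z)))
      - fun z => 2 * f₀ z * √(p0 z)) 2 ν) (𝓝[≠] 0) (𝓝 0) := by
  have hsplit : ∀ t, ((fun z => f t z * (√(S.p t z) + √(p0 z))) - fun z => 2 * f₀ z * √(p0 z))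
      = f t * (fun z => √(S.p t z) - √(p0 z)) + (2 : ℝ) • fun z => (f t - f₀) z * √(p0 z) := by
    intro t
    ext z
    simp only [Pi.sub_apply, Pi.add_apply, Pi.mul_apply, Pi.smul_apply, smul_eq_mul]
    ring
  have h1 := tendsto_eLpNorm_mul_zero_of_abs_le (hf_bdd.filter_mono nhdsWithin_le_nhds)
    S.tendsto_eLpNorm_sqrt_sub_sqrt
  have h2 : Tendsto (fun t => eLpNorm ((2 : ℝ) • fun z => (f t - f₀) z * √(p0 z)) 2 ν)
      (𝓝[≠] 0) (𝓝 0) := by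
    simp_rw [eLpNorm_const_smul, S.isDensityOf_P0.eLpNorm_mul_sqrt S.measurable_p0]
    simpa using ENNReal.Tendsto.const_mul hf_lim (Or.inr enorm_ne_top)
  refine tendsto_of_tendsto_of_tendsto_of_le_of_le' tendsto_const_nhds (by simpa using h1.add h2)
    (Eventually.of_forall fun _ => zero_le) ?_
  filter_upwards [S.eventually_mem_Ioo.filter_mono nhdsWithin_le_nhds] with t ht
  have := S.p_meas t ht
  have := S.measurable_p0
  have := hf_meas t
  rw [hsplit]
  exact eLpNorm_add_le (by fun_prop) (by fun_prop) one_le_two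

end QMDSubmodel

theorem gradient_characterization_derivative_general
    (ν : Measure Z)
    (model : Set (Measure Z))
    (P0 : Measure Z)
    (p0 : Z → ℝ)
    (s : Z → ℝ) (S : QMDSubmodel ν model P0 p0 s)
    (D : Z → ℝ) (Dt : ℝ → Z → ℝ)
    (hD_meas : Measurable D) (hDt_meas : ∀ t, Measurable (Dt t))
    -- (i) unbiasedness along the submodel, and E₀[D] = 0
    (h_unbiased : ∀ᶠ t in 𝓝 (0:ℝ), ∫ z, Dt t z ∂(S.P t) = 0)
    -- (ii) continuity in L₂(P₀)
    (h_cont : Tendsto (fun t => eLpNorm (fun z => Dt t z - D z) 2 P0)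
      (𝓝[≠] (0:ℝ)) (𝓝 0))
    -- (iii) uniform boundedness near 0
    (h_bdd : ∃ C : ℝ, ∃ δ > 0, ∀ t : ℝ, |t| < δ → ∀ z : Z, |Dt t z| ≤ C) :
    HasDerivAt (fun t => ∫ z, Dt t z ∂P0) (-∫ z, D z * s z ∂P0) 0 := by
  have := S.isProbabilityMeasure_P0
  obtain ⟨C, hC⟩ : ∃ C, ∀ᶠ t in 𝓝 (0 : ℝ), ∀ z, |Dt t z| ≤ C := by
    obtain ⟨C, δ, hδ, h⟩ := h_bdd
    exact ⟨C, Metric.eventually_nhds_iff.mpr ⟨δ, hδ, fun {t} ht => h t (by simpa using ht)⟩⟩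
  have hgood := (S.eventually_mem_Ioo.and hC).filter_mono (nhdsWithin_le_nhds (s := {0}ᶜ))
  have hD : MemLp D 2 P0 := memLp_of_tendsto_eLpNorm_sub
    (hgood.mono fun t ⟨_, hCt⟩ => .of_bound (hDt_meas t).aestronglyMeasurable C (ae_of_all _ hCt))
    hD_meas.aestronglyMeasurable h_cont
  have hDs : ∫ z, D z * s z ∂P0 = ∫ z, 2 * D z * √(p0 z) * (1 / 2 * s z * √(p0 z)) ∂ν := by
    rw [S.isDensityOf_P0.integral_eq S.measurable_p0]
    congr 1
    ext z
    ring
  have hlim := tendsto_integral_mul_of_tendsto_eLpNorm_two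
    (hgood.mono fun t ⟨ht, hCt⟩ => S.memLp_mul_sqrt_add_sqrt ht (hDt_meas t) hCt)
    (hgood.mono fun t ⟨ht, _⟩ => S.memLp_diffQuot ht)
    (S.isDensityOf_P0.memLp_mul_sqrt S.measurable_p0 (hD.const_mul 2))
    S.memLp_half_score_mul_sqrt
    (S.tendsto_eLpNorm_mul_sqrt_add_sqrt_sub hDt_meas hD_meas hC h_cont)
    S.tendsto_eLpNorm_diffQuot_sub
  rw [hasDerivAt_iff_tendsto_slope, hDs]
  refine hlim.neg.congr' ?_
  filter_upwards [(S.eventually_slope_integral_eq hDt_meas hC h_unbiased).filter_mono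
    nhdsWithin_le_nhds] with t ht using ht.symm

theorem gradient_characterization_derivative
    (ν : Measure Z) [SigmaFinite ν]
    (model : Set (Measure Z))
    (P0 : Measure Z) [IsProbabilityMeasure P0]
    (p0 : Z → ℝ) (hp0_meas : Measurable p0) (hp0_nonneg : ∀ᵐ z ∂ν, 0 ≤ p0 z)
    (hp0 : IsDensityOf ν P0 p0)
    (s : Z → ℝ) (S : QMDSubmodel ν model P0 p0 s)
    (D : Z → ℝ) (Dt : ℝ → Z → ℝ)
    (hD_meas : Measurable D) (hDt_meas : ∀ t, Measurable (Dt t))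
    -- (i) unbiasedness along the submodel, and E₀[D] = 0
    (h_unbiased : ∀ᶠ t in 𝓝 (0:ℝ), ∫ z, Dt t z ∂(S.P t) = 0)
    (hD_mean : ∫ z, D z ∂P0 = 0)
    -- (ii) continuity in L₂(P₀)
    (h_cont : Tendsto (fun t => eLpNorm (fun z => Dt t z - D z) 2 P0)
      (𝓝[≠] (0:ℝ)) (𝓝 0))
    -- (iii) uniform boundedness near 0
    (h_bdd : ∃ C : ℝ, ∃ δ > 0, ∀ t : ℝ, |t| < δ → ∀ z : Z, |Dt t z| ≤ C) :
    HasDerivAt (fun t => ∫ z, Dt t z ∂P0) (-∫ z, D z * s z ∂P0) 0 :=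
  gradient_characterization_derivative_general ν model P0 p0 s S D Dt hD_meas hDt_meas h_unbiased
    h_cont h_bdd

end Semiparam
end

section
/- Let 𝒫 be a set of distributions P for Z = (Y, X, A), each absolutely continuous with respect to a σ-finite measure ν with density p, such that under every P ∈ 𝒫 one has |Y| ≤ C_Y almost surely and π^P(x) := P(A=1|X=x) ∈ [ε, 1−ε] almost surely, for fixed constants C_Y < ∞ and ε > 0. Let β(P) := E_P[μ₁^P(X) − μ₀^P(X)] where μ_a^P(x) := E_P[Y|X=x,A=a]. Then for all P₁, P₂ ∈ 𝒫, |β(P₁) − β(P₂)| ≤ 4√2 · C_Y · (1 + 1/ε) · H(P₁, P₂), where H(P₁,P₂) := (1/√2)(∫(√p₁ − √p₂)² dν)^{1/2} is the Hellinger distance. -/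
/-!
Let Φ be the AIPW function built from the outcome regressions of P₁ and the propensity score
of P₂. It is doubly robust: its P₁-mean is β(P₁) because the regressions are those of P₁, and
its P₂-mean is β(P₂) because the propensity is that of P₂ (the inverse-propensity-weighted
residuals have mean zero, resp. exactly correct the error of the regressions). Hence
β(P₁) − β(P₂) = ∫ Φ (p₁ − p₂) dν. Since |Φ| ≤ 2 C_Y (1 + 1/ε) and
p₁ − p₂ = (√p₁ − √p₂)(√p₁ + √p₂) with ‖√p₁ + √p₂‖₂ ≤ 2, Cauchy–Schwarz gives the bound.

Regressions and propensities are only determined almost everywhere, so Φ is built from versions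
that are bounded everywhere. That the regressions of P₁ are P₁-a.e. bounded by C_Y on all of X,
and not only on one treatment arm, is where the overlap ε ≤ π ≤ 1 − ε enters.
-/

open MeasureTheory Filter Topology Set ENNReal

namespace ATE

variable {X : Type*} [MeasurableSpace X]

/-- An observation `z = (y, x, a)`: real outcome, covariates, binary treatment. -/
abbrev Obs (X : Type*) := ℝ × X × Bool

/-- `μa` is (a version of) the conditional outcome mean `E_P[Y | X = x, A = a]`:
it is measurable, integrable, and satisfies the defining conditional-expectation
identity against all measurable sets of covariate values. -/
def IsCondMean (P : Measure (Obs X)) (a : Bool) (μa : X → ℝ) : Prop :=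
  Measurable μa ∧ Integrable (fun z : Obs X => μa z.2.1) P ∧
  ∀ B : Set X, MeasurableSet B →
    ∫ z in {z : Obs X | z.2.1 ∈ B ∧ z.2.2 = a}, z.1 ∂P
      = ∫ z in {z : Obs X | z.2.1 ∈ B ∧ z.2.2 = a}, μa z.2.1 ∂P

/-- `pi` is (a version of) the propensity score `P(A = 1 | X = x)`. -/
def IsPropensity (P : Measure (Obs X)) (pi : X → ℝ) : Prop :=
  Measurable pi ∧
  ∀ B : Set X, MeasurableSet B →
    (P {z : Obs X | z.2.1 ∈ B ∧ z.2.2 = true}).toReal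
      = ∫ z in {z : Obs X | z.2.1 ∈ B}, pi z.2.1 ∂P

/-- The AIPW estimating function
`m(z; b, (μ1, μ0, π)) = (a/π(x))(y − μ1(x)) − ((1−a)/(1−π(x)))(y − μ0(x)) + μ1(x) − μ0(x) − b`. -/
noncomputable def aipw (μ1 μ0 pi : X → ℝ) (b : ℝ) (z : Obs X) : ℝ :=
  (if z.2.2 then (1:ℝ) else 0) / pi z.2.1 * (z.1 - μ1 z.2.1)
    - (1 - if z.2.2 then (1:ℝ) else 0) / (1 - pi z.2.1) * (z.1 - μ0 z.2.1)
    + μ1 z.2.1 - μ0 z.2.1 - b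

/-- `p` is a density of `P` with respect to `ν`. -/
def IsDensityOf {Z : Type*} [MeasurableSpace Z] (ν P : Measure Z) (p : Z → ℝ) : Prop :=
  P = ν.withDensity (fun z => ENNReal.ofReal (p z))

/-- The Hellinger distance between two densities. -/
noncomputable def hellingerDist {Z : Type*} [MeasurableSpace Z]
    (ν : Measure Z) (p q : Z → ℝ) : ℝ :=
  (1 / Real.sqrt 2) * Real.sqrt (∫ z, (Real.sqrt (p z) - Real.sqrt (q z)) ^ 2 ∂ν)

theorem integral_comp_mul_eq_of_forall_setIntegral_preimage_eq
    {Ω α : Type*} {mΩ : MeasurableSpace Ω} [MeasurableSpace α]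
    {P : Measure Ω} [IsFiniteMeasure P] {φ : Ω → α} (hφ : Measurable φ)
    {f g : Ω → ℝ} (hf : Integrable f P) (hg : Integrable g P)
    (hfg : ∀ B, MeasurableSet B → ∫ ω in φ ⁻¹' B, f ω ∂P = ∫ ω in φ ⁻¹' B, g ω ∂P)
    {h : α → ℝ} (hh : Measurable h) {c : ℝ} (hc : ∀ x, |h x| ≤ c) :
    ∫ ω, h (φ ω) * f ω ∂P = ∫ ω, h (φ ω) * g ω ∂P := by
  set m := MeasurableSpace.comap φ ‹MeasurableSpace α›
  have hm : m ≤ mΩ := hφ.comap_le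
  have hcond : P[g | m] =ᵐ[P] P[f | m] := by
    refine ae_eq_condExp_of_forall_setIntegral_eq hm hf
      (fun _ _ _ => integrable_condExp.integrableOn) ?_
      stronglyMeasurable_condExp.aestronglyMeasurable
    rintro _ ⟨B, hB, rfl⟩ -
    rw [setIntegral_condExp hm hg ⟨B, hB, rfl⟩, hfg B hB]
  have hhφ : StronglyMeasurable[m] (h ∘ φ) := (hh.comp (comap_measurable φ)).stronglyMeasurable
  have pull : ∀ k : Ω → ℝ, Integrable k P →
      ∫ ω, h (φ ω) * k ω ∂P = ∫ ω, h (φ ω) * (P[k | m]) ω ∂P := fun k hk => by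
    rw [← integral_condExp hm]
    exact integral_congr_ae (condExp_stronglyMeasurable_mul_of_bound hm hhφ hk c
      (Eventually.of_forall fun ω => hc (φ ω)))
  rw [pull f hf, pull g hg]
  exact integral_congr_ae (hcond.symm.mono fun ω hω => by simp [hω])

section Hellinger

variable {Z : Type*} [MeasurableSpace Z] {ν P Q : Measure Z} {p q : Z → ℝ}

theorem integral_mul_le_sqrt_mul_sqrt {f g : Z → ℝ} (hf0 : 0 ≤ᵐ[ν] f) (hg0 : 0 ≤ᵐ[ν] g)
    (hf : MemLp f 2 ν) (hg : MemLp g 2 ν) :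
    ∫ z, f z * g z ∂ν ≤ √(∫ z, f z ^ 2 ∂ν) * √(∫ z, g z ^ 2 ∂ν) := by
  have h2 : ENNReal.ofReal 2 = 2 := by norm_num
  have := integral_mul_le_Lp_mul_Lq_of_nonneg Real.HolderConjugate.two_two hf0 hg0
    (h2 ▸ hf) (h2 ▸ hg)
  simpa only [Real.sqrt_eq_rpow, ← Real.rpow_natCast, Nat.cast_ofNat] using this

theorem abs_sub_eq_abs_sqrt_sub_mul_sqrt_add {x y : ℝ} (hx : 0 ≤ x) (hy : 0 ≤ y) :
    |x - y| = |√x - √y| * (√x + √y) := by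
  have hfactor : x - y = (√x - √y) * (√x + √y) := by
    linear_combination -(Real.sq_sqrt hx) + Real.sq_sqrt hy
  rw [hfactor, abs_mul, abs_of_nonneg (by positivity : 0 ≤ √x + √y)]

theorem IsDensityOf.integral_eq (hP : IsDensityOf ν P p) (hp : Measurable p) (hp0 : 0 ≤ᵐ[ν] p)
    (f : Z → ℝ) : ∫ z, f z ∂P = ∫ z, p z * f z ∂ν := by
  rw [hP, integral_withDensity_eq_integral_toReal_smul hp.ennreal_ofReal
    (Eventually.of_forall fun _ => ofReal_lt_top)]
  exact integral_congr_ae (hp0.mono fun z hz => by simp [ENNReal.toReal_ofReal hz])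

theorem IsDensityOf.integrable_mul (hP : IsDensityOf ν P p) (hp : Measurable p)
    (hp0 : 0 ≤ᵐ[ν] p) {f : Z → ℝ} (hf : Integrable f P) :
    Integrable (fun z => p z * f z) ν := by
  rw [hP, integrable_withDensity_iff hp.ennreal_ofReal
    (Eventually.of_forall fun _ => ofReal_lt_top)] at hf
  exact hf.congr (hp0.mono fun z hz => by simp [ENNReal.toReal_ofReal hz, mul_comm])

theorem IsDensityOf.integrable [IsFiniteMeasure P] (hP : IsDensityOf ν P p)
    (hp : Measurable p) (hp0 : 0 ≤ᵐ[ν] p) : Integrable p ν := by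
  simpa using hP.integrable_mul hp hp0 (integrable_const 1)

theorem IsDensityOf.integral_eq_one [IsProbabilityMeasure P] (hP : IsDensityOf ν P p)
    (hp : Measurable p) (hp0 : 0 ≤ᵐ[ν] p) : ∫ z, p z ∂ν = 1 := by
  simpa using (hP.integral_eq hp hp0 1).symm

theorem IsDensityOf.memLp_sqrt [IsFiniteMeasure P] (hP : IsDensityOf ν P p)
    (hp : Measurable p) (hp0 : 0 ≤ᵐ[ν] p) : MemLp (fun z => √(p z)) 2 ν :=
  (memLp_two_iff_integrable_sq hp.sqrt.aestronglyMeasurable).mpr <|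
    (hP.integrable hp hp0).congr (hp0.mono fun _ hz => (Real.sq_sqrt hz).symm)

theorem integral_sq_sqrt_add_sqrt_le [IsProbabilityMeasure P] [IsProbabilityMeasure Q]
    (hP : IsDensityOf ν P p) (hQ : IsDensityOf ν Q q) (hp : Measurable p) (hq : Measurable q)
    (hp0 : 0 ≤ᵐ[ν] p) (hq0 : 0 ≤ᵐ[ν] q) :
    ∫ z, (√(p z) + √(q z)) ^ 2 ∂ν ≤ 4 := by
  have hp2 := (hP.integrable hp hp0).const_mul 2
  have hq2 := (hQ.integrable hq hq0).const_mul 2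
  calc ∫ z, (√(p z) + √(q z)) ^ 2 ∂ν ≤ ∫ z, (2 * p z + 2 * q z) ∂ν := by
        refine integral_mono_ae ((hP.memLp_sqrt hp hp0).add (hQ.memLp_sqrt hq hq0)).integrable_sq
          (hp2.add hq2) ?_
        filter_upwards [hp0, hq0] with z hpz hqz
        nlinarith [Real.sq_sqrt hpz, Real.sq_sqrt hqz, sq_nonneg (√(p z) - √(q z))]
    _ = 4 := by
        rw [integral_add hp2 hq2, integral_const_mul, integral_const_mul,
          hP.integral_eq_one hp hp0, hQ.integral_eq_one hq hq0]
        norm_num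

theorem abs_integral_sub_integral_le_hellingerDist [IsProbabilityMeasure P]
    [IsProbabilityMeasure Q] (hP : IsDensityOf ν P p) (hQ : IsDensityOf ν Q q)
    (hp : Measurable p) (hq : Measurable q) (hp0 : 0 ≤ᵐ[ν] p) (hq0 : 0 ≤ᵐ[ν] q)
    {f : Z → ℝ} (hf : Measurable f) {M : ℝ} (hfP : ∀ᵐ z ∂P, |f z| ≤ M)
    (hfQ : ∀ᵐ z ∂Q, |f z| ≤ M) :
    |∫ z, f z ∂P - ∫ z, f z ∂Q| ≤ 2 * √2 * M * hellingerDist ν p q := by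
  have hM : 0 ≤ M := hfP.exists.elim fun _ hz => (abs_nonneg _).trans hz
  have hpf := hP.integrable_mul hp hp0 (.of_bound hf.aestronglyMeasurable M hfP)
  have hqf := hQ.integrable_mul hq hq0 (.of_bound hf.aestronglyMeasurable M hfQ)
  have hu : MemLp (fun z => |√(p z) - √(q z)|) 2 ν :=
    ((hP.memLp_sqrt hp hp0).sub (hQ.memLp_sqrt hq hq0)).abs
  have hv : MemLp (fun z => √(p z) + √(q z)) 2 ν :=
    (hP.memLp_sqrt hp hp0).add (hQ.memLp_sqrt hq hq0)
  have hpointwise : ∀ᵐ z ∂ν,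
      |p z * f z - q z * f z| ≤ M * (|√(p z) - √(q z)| * (√(p z) + √(q z))) := by
    rw [hP, ae_withDensity_iff hp.ennreal_ofReal] at hfP
    rw [hQ, ae_withDensity_iff hq.ennreal_ofReal] at hfQ
    filter_upwards [hp0, hq0, hfP, hfQ] with z hpz hqz hfPz hfQz
    rw [← sub_mul, abs_mul, abs_sub_eq_abs_sqrt_sub_mul_sqrt_add hpz hqz, mul_comm M]
    rcases hpz.eq_or_lt with hpz' | hpz'
    · rcases hqz.eq_or_lt with hqz' | hqz'
      · simp [← hpz', ← hqz']
      · exact mul_le_mul_of_nonneg_left (hfQz (by simpa using hqz')) (by positivity)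
    · exact mul_le_mul_of_nonneg_left (hfPz (by simpa using hpz')) (by positivity)
  calc |∫ z, f z ∂P - ∫ z, f z ∂Q|
      = |∫ z, (p z * f z - q z * f z) ∂ν| := by
        rw [hP.integral_eq hp hp0, hQ.integral_eq hq hq0, integral_sub hpf hqf]
    _ ≤ ∫ z, |p z * f z - q z * f z| ∂ν := abs_integral_le_integral_abs
    _ ≤ ∫ z, M * (|√(p z) - √(q z)| * (√(p z) + √(q z))) ∂ν :=
        integral_mono_ae (hpf.sub hqf).abs ((hu.integrable_mul hv).const_mul M) hpointwise
    _ = M * ∫ z, |√(p z) - √(q z)| * (√(p z) + √(q z)) ∂ν := integral_const_mul M _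
    _ ≤ M * (√(∫ z, |√(p z) - √(q z)| ^ 2 ∂ν) * √(∫ z, (√(p z) + √(q z)) ^ 2 ∂ν)) := by
        gcongr
        exact integral_mul_le_sqrt_mul_sqrt (Eventually.of_forall fun _ => abs_nonneg _)
          (Eventually.of_forall fun _ => by positivity) hu hv
    _ ≤ M * (√(∫ z, |√(p z) - √(q z)| ^ 2 ∂ν) * √4) := by
        gcongr
        exact integral_sq_sqrt_add_sqrt_le hP hQ hp hq hp0 hq0
    _ = 2 * √2 * M * hellingerDist ν p q := by
        rw [show (4 : ℝ) = 2 ^ 2 by norm_num, Real.sqrt_sq zero_le_two]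
        simp only [hellingerDist, sq_abs]
        field_simp

end Hellinger

section Observation

variable {P : Measure (Obs X)} {a : Bool}

def armIndicator (a : Bool) (z : Obs X) : ℝ := if z.2.2 = a then 1 else 0

def armPropensity (pi : X → ℝ) (a : Bool) (x : X) : ℝ := if a then pi x else 1 - pi x

theorem measurable_covariate : Measurable (fun z : Obs X => z.2.1) := measurable_snd.fst

theorem measurableSet_arm (a : Bool) : MeasurableSet {z : Obs X | z.2.2 = a} :=
  measurable_snd.snd (measurableSet_singleton a)

theorem integrable_comp_covariate [IsFiniteMeasure P] {h : X → ℝ} (hh : Measurable h) {c : ℝ}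
    (hc : ∀ᵐ z ∂P, |h z.2.1| ≤ c) : Integrable (fun z : Obs X => h z.2.1) P :=
  .of_bound (hh.comp measurable_covariate).aestronglyMeasurable c hc

theorem integrable_comp_covariate_mul {h : X → ℝ} (hh : Measurable h) {c : ℝ}
    (hc : ∀ x, |h x| ≤ c) {f : Obs X → ℝ} (hf : Integrable f P) :
    Integrable (fun z => h z.2.1 * f z) P :=
  hf.bdd_mul (hh.comp measurable_covariate).aestronglyMeasurable
    (Eventually.of_forall fun z => hc z.2.1)

theorem measurable_armIndicator (a : Bool) : Measurable (armIndicator (X := X) a) :=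
  Measurable.ite (measurableSet_arm a) measurable_const measurable_const

theorem ae_abs_armIndicator_le (P : Measure (Obs X)) (a : Bool) :
    ∀ᵐ z ∂P, |armIndicator a z| ≤ 1 :=
  Eventually.of_forall fun z => by unfold armIndicator; split_ifs <;> simp

theorem integrable_armIndicator [IsFiniteMeasure P] (a : Bool) : Integrable (armIndicator a) P :=
  .of_bound (measurable_armIndicator a).aestronglyMeasurable 1 (ae_abs_armIndicator_le P a)

theorem integrable_armIndicator_mul {f : Obs X → ℝ} (hf : Integrable f P) (a : Bool) :
    Integrable (fun z => armIndicator a z * f z) P :=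
  hf.bdd_mul (measurable_armIndicator a).aestronglyMeasurable (ae_abs_armIndicator_le P a)

omit [MeasurableSpace X] in
theorem armIndicator_false (z : Obs X) : armIndicator false z = 1 - armIndicator true z := by
  unfold armIndicator; cases z.2.2 <;> simp

omit [MeasurableSpace X] in
theorem armPropensity_mem_Icc {pi : X → ℝ} {eps : ℝ} {x : X} (hx : pi x ∈ Icc eps (1 - eps))
    (a : Bool) : armPropensity pi a x ∈ Icc eps (1 - eps) := by
  cases a <;> simp only [armPropensity, Bool.false_eq_true, if_false, if_true, mem_Icc] at hx ⊢ <;>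
    constructor <;> linarith [hx.1, hx.2]

theorem integrable_armPropensity [IsFiniteMeasure P] {pi : X → ℝ}
    (hint : Integrable (fun z : Obs X => pi z.2.1) P) (a : Bool) :
    Integrable (fun z : Obs X => armPropensity pi a z.2.1) P := by
  cases a
  · exact (integrable_const 1).sub hint
  · exact hint

theorem setIntegral_arm_eq_setIntegral_armIndicator_mul (f : Obs X → ℝ) (B : Set X) :
    ∫ z in {z : Obs X | z.2.1 ∈ B ∧ z.2.2 = a}, f z ∂P
      = ∫ z in (fun z : Obs X => z.2.1) ⁻¹' B, armIndicator a z * f z ∂P := by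
  have hind : (fun z => armIndicator a z * f z) = {z : Obs X | z.2.2 = a}.indicator f := by
    ext z; simp [armIndicator, Set.indicator_apply]
  rw [hind, setIntegral_indicator (t := {z : Obs X | z.2.2 = a}) (measurableSet_arm a)]
  rfl

theorem IsCondMean.integral_residual_eq_zero [IsFiniteMeasure P] {μ : X → ℝ}
    (hμ : IsCondMean P a μ) (hY : Integrable (fun z : Obs X => z.1) P) {h : X → ℝ}
    (hh : Measurable h) {c : ℝ} (hc : ∀ x, |h x| ≤ c) :
    ∫ z, h z.2.1 * (armIndicator a z * (z.1 - μ z.2.1)) ∂P = 0 := by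
  have hY' := integrable_armIndicator_mul hY a
  have hμ' := integrable_armIndicator_mul hμ.2.1 a
  have key := integral_comp_mul_eq_of_forall_setIntegral_preimage_eq measurable_covariate hY' hμ'
    (fun B hB => by
      rw [← setIntegral_arm_eq_setIntegral_armIndicator_mul,
        ← setIntegral_arm_eq_setIntegral_armIndicator_mul, hμ.2.2 B hB]) hh hc
  calc ∫ z, h z.2.1 * (armIndicator a z * (z.1 - μ z.2.1)) ∂P
      = ∫ z, (h z.2.1 * (armIndicator a z * z.1) - h z.2.1 * (armIndicator a z * μ z.2.1)) ∂P :=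
        integral_congr_ae (Eventually.of_forall fun z => by ring)
    _ = 0 := by
        rw [integral_sub (integrable_comp_covariate_mul hh hc hY')
          (integrable_comp_covariate_mul hh hc hμ'), key, sub_self]

theorem IsPropensity.setIntegral_armIndicator [IsFiniteMeasure P] {pi : X → ℝ}
    (hpi : IsPropensity P pi) (hint : Integrable (fun z : Obs X => pi z.2.1) P) (a : Bool)
    {B : Set X} (hB : MeasurableSet B) :
    ∫ z in (fun z : Obs X => z.2.1) ⁻¹' B, armIndicator a z ∂P
      = ∫ z in (fun z : Obs X => z.2.1) ⁻¹' B, armPropensity pi a z.2.1 ∂P := by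
  have htrue : ∫ z in (fun z : Obs X => z.2.1) ⁻¹' B, armIndicator true z ∂P
      = ∫ z in (fun z : Obs X => z.2.1) ⁻¹' B, pi z.2.1 ∂P := by
    have h := setIntegral_arm_eq_setIntegral_armIndicator_mul (P := P) (a := true) (fun _ => 1) B
    simp only [mul_one, setIntegral_const, smul_eq_mul] at h
    rw [← h, measureReal_def]
    exact hpi.2 B hB
  cases a
  · simp only [armIndicator_false, armPropensity, Bool.false_eq_true, if_false]
    rw [integral_sub (integrable_const 1) (integrable_armIndicator true).integrableOn,
      integral_sub (integrable_const 1) hint.integrableOn, htrue]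
  · exact htrue

theorem IsPropensity.integral_mul_armIndicator [IsFiniteMeasure P] {pi : X → ℝ}
    (hpi : IsPropensity P pi) (hint : Integrable (fun z : Obs X => pi z.2.1) P) (a : Bool)
    {h : X → ℝ} (hh : Measurable h) {c : ℝ} (hc : ∀ x, |h x| ≤ c) :
    ∫ z, h z.2.1 * armIndicator a z ∂P = ∫ z, h z.2.1 * armPropensity pi a z.2.1 ∂P :=
  integral_comp_mul_eq_of_forall_setIntegral_preimage_eq measurable_covariate
    (integrable_armIndicator a) (integrable_armPropensity hint a)
    (fun _ hB => hpi.setIntegral_armIndicator hint a hB) hh hc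

theorem IsPropensity.measure_preimage_eq_zero_of_arm [IsFiniteMeasure P] {pi : X → ℝ}
    (hpi : IsPropensity P pi) {eps : ℝ} (heps : 0 < eps)
    (hrange : ∀ᵐ z ∂P, pi z.2.1 ∈ Icc eps (1 - eps)) {B : Set X} (hB : MeasurableSet B)
    (harm : P {z : Obs X | z.2.1 ∈ B ∧ z.2.2 = a} = 0) :
    P ((fun z : Obs X => z.2.1) ⁻¹' B) = 0 := by
  have hint : Integrable (fun z : Obs X => pi z.2.1) P :=
    integrable_comp_covariate (c := 1) hpi.1 <|
      hrange.mono fun _ hz => abs_le.mpr ⟨by linarith [hz.1], by linarith [hz.2]⟩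
  have hlower : eps * P.real ((fun z : Obs X => z.2.1) ⁻¹' B)
      ≤ ∫ z in (fun z : Obs X => z.2.1) ⁻¹' B, armPropensity pi a z.2.1 ∂P := by
    rw [mul_comm, ← smul_eq_mul, ← setIntegral_const]
    exact integral_mono_ae (integrable_const eps) (integrable_armPropensity hint a).integrableOn
      (ae_restrict_of_ae (hrange.mono fun _ hz => (armPropensity_mem_Icc hz a).1))
  have hzero : ∫ z in (fun z : Obs X => z.2.1) ⁻¹' B, armIndicator a z ∂P = 0 := by
    have h := setIntegral_arm_eq_setIntegral_armIndicator_mul (P := P) (a := a) (fun _ => 1) B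
    simp only [mul_one, setIntegral_const, smul_eq_mul, measureReal_def, harm] at h
    simpa using h.symm
  rw [← hpi.setIntegral_armIndicator hint a hB, hzero] at hlower
  exact (measureReal_eq_zero_iff).mp <|
    le_antisymm (nonpos_of_mul_nonpos_right hlower heps) measureReal_nonneg

theorem IsCondMean.measure_arm_eq_zero [IsFiniteMeasure P] {μ : X → ℝ} (hμ : IsCondMean P a μ)
    (hY : Integrable (fun z : Obs X => z.1) P) (s : ℝ) {B : Set X} (hB : MeasurableSet B)
    (hpos : ∀ᵐ z ∂P, z.2.1 ∈ B → z.2.2 = a → 0 < s * (μ z.2.1 - z.1)) :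
    P {z : Obs X | z.2.1 ∈ B ∧ z.2.2 = a} = 0 := by
  set S := {z : Obs X | z.2.1 ∈ B ∧ z.2.2 = a}
  have hpos' : ∀ᵐ z ∂P.restrict S, 0 < s * (μ z.2.1 - z.1) :=
    (ae_restrict_iff' ((measurable_covariate hB).inter (measurableSet_arm a))).mpr
      (hpos.mono fun _ hz hzS => hz hzS.1 hzS.2)
  have hzero : ∫ z in S, s * (μ z.2.1 - z.1) ∂P = 0 := by
    rw [integral_const_mul, integral_sub hμ.2.1.integrableOn hY.integrableOn, hμ.2.2 B hB,
      sub_self, mul_zero]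
  rw [setIntegral_eq_zero_iff_of_nonneg_ae (hpos'.mono fun _ hz => hz.le)
    ((hμ.2.1.sub hY).const_mul s).integrableOn] at hzero
  have hfalse : ∀ᵐ z ∂P.restrict S, False :=
    (hzero.and hpos').mono fun _ ⟨h0, hp⟩ => by simp_all
  exact Measure.restrict_eq_zero.mp (ae_eq_bot.mp (eventually_false_iff_eq_bot.mp hfalse))

theorem IsCondMean.ae_abs_le [IsFiniteMeasure P] {μ : X → ℝ} (hμ : IsCondMean P a μ)
    {pi : X → ℝ} (hpi : IsPropensity P pi) {eps : ℝ} (heps : 0 < eps)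
    (hrange : ∀ᵐ z ∂P, pi z.2.1 ∈ Icc eps (1 - eps)) {C : ℝ} (hY : ∀ᵐ z ∂P, |z.1| ≤ C) :
    ∀ᵐ z ∂P, |μ z.2.1| ≤ C := by
  have hYint : Integrable (fun z : Obs X => z.1) P :=
    .of_bound measurable_fst.aestronglyMeasurable C hY
  have hup : P ((fun z : Obs X => z.2.1) ⁻¹' (μ ⁻¹' Ioi C)) = 0 :=
    hpi.measure_preimage_eq_zero_of_arm heps hrange (hμ.1 measurableSet_Ioi) <|
      hμ.measure_arm_eq_zero hYint 1 (hμ.1 measurableSet_Ioi) <| hY.mono fun z hz hzB _ => by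
        have : C < μ z.2.1 := hzB
        linarith [(abs_le.mp hz).2]
  have hlow : P ((fun z : Obs X => z.2.1) ⁻¹' (μ ⁻¹' Iio (-C))) = 0 :=
    hpi.measure_preimage_eq_zero_of_arm heps hrange (hμ.1 measurableSet_Iio) <|
      hμ.measure_arm_eq_zero hYint (-1) (hμ.1 measurableSet_Iio) <| hY.mono fun z hz hzB _ => by
        have : μ z.2.1 < -C := hzB
        linarith [(abs_le.mp hz).1]
  filter_upwards [measure_eq_zero_iff_ae_notMem.mp hup, measure_eq_zero_iff_ae_notMem.mp hlow]
    with z hzu hzl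
  simp only [mem_preimage, mem_Ioi, mem_Iio, not_lt] at hzu hzl
  exact abs_le.mpr ⟨hzl, hzu⟩

theorem IsCondMean.congr_ae {μ μ' : X → ℝ} (hμ : IsCondMean P a μ) (hμ' : Measurable μ')
    (heq : ∀ᵐ z ∂P, μ' z.2.1 = μ z.2.1) : IsCondMean P a μ' := by
  refine ⟨hμ', hμ.2.1.congr (heq.mono fun _ h => h.symm), fun B hB => ?_⟩
  rw [hμ.2.2 B hB]
  exact setIntegral_congr_ae ((measurable_covariate hB).inter (measurableSet_arm a))
    (heq.mono fun _ h _ => h.symm)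

theorem IsPropensity.congr_ae {pi pi' : X → ℝ} (hpi : IsPropensity P pi) (hpi' : Measurable pi')
    (heq : ∀ᵐ z ∂P, pi' z.2.1 = pi z.2.1) : IsPropensity P pi' := by
  refine ⟨hpi', fun B hB => ?_⟩
  rw [hpi.2 B hB]
  exact setIntegral_congr_ae (measurable_covariate hB) (heq.mono fun _ h _ => h.symm)

theorem IsCondMean.exists_bounded [NeZero P] {μ : X → ℝ} (hμ : IsCondMean P a μ) {C : ℝ}
    (hC : ∀ᵐ z ∂P, |μ z.2.1| ≤ C) :
    ∃ μ' : X → ℝ, IsCondMean P a μ' ∧ (∀ x, |μ' x| ≤ C) ∧ ∀ᵐ z ∂P, μ' z.2.1 = μ z.2.1 := by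
  obtain ⟨_, hz⟩ := hC.exists
  have hC0 : 0 ≤ C := (abs_nonneg _).trans hz
  have heq : ∀ᵐ z ∂P, max (-C) (min C (μ z.2.1)) = μ z.2.1 := hC.mono fun _ hz => by
    rw [min_eq_right (abs_le.mp hz).2, max_eq_right (abs_le.mp hz).1]
  refine ⟨fun x => max (-C) (min C (μ x)), hμ.congr_ae ?_ heq, fun x => ?_, heq⟩
  · exact measurable_const.max (measurable_const.min hμ.1)
  · exact abs_le.mpr ⟨le_max_left _ _, max_le (by linarith) (min_le_left _ _)⟩

theorem IsPropensity.exists_mem_Icc [NeZero P] {pi : X → ℝ} (hpi : IsPropensity P pi) {eps : ℝ}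
    (hrange : ∀ᵐ z ∂P, pi z.2.1 ∈ Icc eps (1 - eps)) :
    ∃ pi' : X → ℝ, IsPropensity P pi' ∧ ∀ x, pi' x ∈ Icc eps (1 - eps) := by
  obtain ⟨_, hz⟩ := hrange.exists
  have heq : ∀ᵐ z ∂P, max eps (min (1 - eps) (pi z.2.1)) = pi z.2.1 := hrange.mono fun _ hz => by
    rw [min_eq_right hz.2, max_eq_right hz.1]
  refine ⟨fun x => max eps (min (1 - eps) (pi x)), hpi.congr_ae ?_ heq, fun x => ?_⟩
  · exact measurable_const.max (measurable_const.min hpi.1)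
  · exact ⟨le_max_left _ _, max_le (hz.1.trans hz.2) (min_le_left _ _)⟩

end Observation

section AIPW

variable {P : Measure (Obs X)} {pi : X → ℝ} {eps : ℝ}

noncomputable def ipwResidual (pi m : X → ℝ) (a : Bool) (z : Obs X) : ℝ :=
  (armPropensity pi a z.2.1)⁻¹ * (armIndicator a z * (z.1 - m z.2.1))

omit [MeasurableSpace X] in
theorem aipw_eq (m : Bool → X → ℝ) (pi : X → ℝ) (b : ℝ) (z : Obs X) :
    aipw (m true) (m false) pi b z = ipwResidual pi (m true) true z
      - ipwResidual pi (m false) false z + (m true z.2.1 - m false z.2.1) - b := by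
  rcases z with ⟨y, x, _ | _⟩ <;>
    simp only [aipw, ipwResidual, armPropensity, armIndicator, Bool.false_eq_true,
      Bool.true_eq_false, ↓reduceIte, zero_div, zero_mul, mul_zero, one_mul, one_div, zero_sub,
      sub_zero, sub_self, sub_left_inj] <;>
    ring

theorem measurable_armPropensity (hpi : Measurable pi) (a : Bool) :
    Measurable (armPropensity pi a) := by
  cases a
  · exact measurable_const.sub hpi
  · exact hpi

omit [MeasurableSpace X] in
theorem abs_inv_armPropensity_le (heps : 0 < eps) (hpi : ∀ x, pi x ∈ Icc eps (1 - eps))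
    (a : Bool) (x : X) : |(armPropensity pi a x)⁻¹| ≤ eps⁻¹ := by
  have h := (armPropensity_mem_Icc (hpi x) a).1
  rw [abs_of_pos (inv_pos.mpr (heps.trans_le h))]
  exact inv_anti₀ heps h

theorem integral_aipw [IsProbabilityMeasure P] (hpi_meas : Measurable pi) (heps : 0 < eps)
    (hpi : ∀ x, pi x ∈ Icc eps (1 - eps)) (hY : Integrable (fun z : Obs X => z.1) P)
    {m : Bool → X → ℝ} (hm : ∀ a, Integrable (fun z : Obs X => m a z.2.1) P) (b : ℝ) :
    ∫ z, aipw (m true) (m false) pi b z ∂P = ∫ z, ipwResidual pi (m true) true z ∂P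
      - ∫ z, ipwResidual pi (m false) false z ∂P
      + ∫ z, (m true z.2.1 - m false z.2.1) ∂P - b := by
  have hres (a : Bool) : Integrable (ipwResidual pi (m a) a) P :=
    integrable_comp_covariate_mul ((measurable_armPropensity hpi_meas a).inv)
      (abs_inv_armPropensity_le heps hpi a) (integrable_armIndicator_mul (hY.sub (hm a)) a)
  have hdiff : Integrable (fun z : Obs X => m true z.2.1 - m false z.2.1) P :=
    (hm true).sub (hm false)
  simp only [aipw_eq]
  rw [integral_sub, integral_add, integral_sub (hres true) (hres false), integral_const,
    probReal_univ, one_smul]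
  exacts [(hres true).sub (hres false), hdiff, ((hres true).sub (hres false)).add hdiff,
    integrable_const b]

theorem integral_aipw_of_isCondMean [IsProbabilityMeasure P] (hpi_meas : Measurable pi)
    (heps : 0 < eps) (hpi : ∀ x, pi x ∈ Icc eps (1 - eps))
    (hY : Integrable (fun z : Obs X => z.1) P) {μ : Bool → X → ℝ}
    (hμ : ∀ a, IsCondMean P a (μ a)) (b : ℝ) :
    ∫ z, aipw (μ true) (μ false) pi b z ∂P = ∫ z, (μ true z.2.1 - μ false z.2.1) ∂P - b := by
  have hres (a : Bool) : ∫ z, ipwResidual pi (μ a) a z ∂P = 0 :=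
    (hμ a).integral_residual_eq_zero hY (measurable_armPropensity hpi_meas a).inv
      (abs_inv_armPropensity_le heps hpi a)
  rw [integral_aipw hpi_meas heps hpi hY (fun a => (hμ a).2.1), hres, hres, sub_zero, zero_add]

theorem IsPropensity.integral_ipwResidual [IsFiniteMeasure P] (hpi : IsPropensity P pi)
    (heps : 0 < eps) (hpi_range : ∀ x, pi x ∈ Icc eps (1 - eps))
    (hY : Integrable (fun z : Obs X => z.1) P) {a : Bool} {μ m : X → ℝ}
    (hμ : IsCondMean P a μ) {C : ℝ} (hμC : ∀ x, |μ x| ≤ C) (hm : Measurable m)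
    (hmC : ∀ x, |m x| ≤ C) :
    ∫ z, ipwResidual pi m a z ∂P = ∫ z, (μ z.2.1 - m z.2.1) ∂P := by
  set h := fun x => (armPropensity pi a x)⁻¹
  have hh : Measurable h := (measurable_armPropensity hpi.1 a).inv
  have hhC := abs_inv_armPropensity_le heps hpi_range a
  have hint : Integrable (fun z : Obs X => pi z.2.1) P :=
    integrable_comp_covariate (c := 1) hpi.1 <| Eventually.of_forall fun z =>
      abs_le.mpr ⟨by linarith [(hpi_range z.2.1).1], by linarith [(hpi_range z.2.1).2]⟩
  set k := fun x => h x * (μ x - m x)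
  have hk : Measurable k := hh.mul (hμ.1.sub hm)
  have hkC : ∀ x, |k x| ≤ eps⁻¹ * (C + C) := fun x => by
    rw [abs_mul]
    exact mul_le_mul (hhC x) ((abs_sub _ _).trans (add_le_add (hμC x) (hmC x))) (abs_nonneg _)
      (inv_nonneg.mpr heps.le)
  have hsplit : ∀ z : Obs X, ipwResidual pi m a z
      = h z.2.1 * (armIndicator a z * (z.1 - μ z.2.1)) + k z.2.1 * armIndicator a z :=
    fun z => by simp only [ipwResidual, h, k]; ring
  have hcancel : ∀ x, k x * armPropensity pi a x = μ x - m x := fun x => by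
    have := (armPropensity_mem_Icc (hpi_range x) a).1
    simp only [k, h]
    field_simp [(heps.trans_le this).ne']
  have hres : Integrable (fun z : Obs X => h z.2.1 * (armIndicator a z * (z.1 - μ z.2.1))) P :=
    integrable_comp_covariate_mul hh hhC (integrable_armIndicator_mul (hY.sub hμ.2.1) a)
  have hkX : Integrable (fun z : Obs X => k z.2.1 * armIndicator a z) P :=
    integrable_comp_covariate_mul hk hkC (integrable_armIndicator a)
  simp only [hsplit]
  rw [integral_add hres hkX, hμ.integral_residual_eq_zero hY hh hhC, zero_add,
    hpi.integral_mul_armIndicator hint a hk hkC]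
  simp only [hcancel]

theorem integral_aipw_of_isPropensity [IsProbabilityMeasure P] (hpi : IsPropensity P pi)
    (heps : 0 < eps) (hpi_range : ∀ x, pi x ∈ Icc eps (1 - eps))
    (hY : Integrable (fun z : Obs X => z.1) P) {μ m : Bool → X → ℝ}
    (hμ : ∀ a, IsCondMean P a (μ a)) {C : ℝ} (hμC : ∀ a x, |μ a x| ≤ C)
    (hm : ∀ a, Measurable (m a)) (hmC : ∀ a x, |m a x| ≤ C) (b : ℝ) :
    ∫ z, aipw (m true) (m false) pi b z ∂P = ∫ z, (μ true z.2.1 - μ false z.2.1) ∂P - b := by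
  have hμX (a : Bool) : Integrable (fun z : Obs X => μ a z.2.1) P := (hμ a).2.1
  have hmX (a : Bool) : Integrable (fun z : Obs X => m a z.2.1) P :=
    integrable_comp_covariate (hm a) (Eventually.of_forall fun z => hmC a z.2.1)
  rw [integral_aipw hpi.1 heps hpi_range hY hmX,
    hpi.integral_ipwResidual heps hpi_range hY (hμ true) (hμC true) (hm true) (hmC true),
    hpi.integral_ipwResidual heps hpi_range hY (hμ false) (hμC false) (hm false) (hmC false),
    integral_sub (hμX true) (hmX true), integral_sub (hμX false) (hmX false),
    integral_sub (hmX true) (hmX false), integral_sub (hμX true) (hμX false)]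
  ring

theorem measurable_aipw {μ1 μ0 : X → ℝ} (hμ1 : Measurable μ1) (hμ0 : Measurable μ0)
    (hpi : Measurable pi) (b : ℝ) : Measurable (aipw μ1 μ0 pi b) := by
  have hA : Measurable (fun z : Obs X => if z.2.2 then (1 : ℝ) else 0) :=
    measurable_armIndicator true
  have hX := measurable_covariate (X := X)
  unfold aipw
  fun_prop

omit [MeasurableSpace X] in
theorem abs_aipw_le (heps : 0 < eps) (hpi : ∀ x, pi x ∈ Icc eps (1 - eps)) {m : Bool → X → ℝ}
    {C : ℝ} (hmC : ∀ a x, |m a x| ≤ C) {z : Obs X} (hz : |z.1| ≤ C) :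
    |aipw (m true) (m false) pi 0 z| ≤ 2 * C * (1 + 1 / eps) := by
  have hdiff : |m true z.2.1 - m false z.2.1| ≤ 2 * C := by
    linarith [abs_sub (m true z.2.1) (m false z.2.1), hmC true z.2.1, hmC false z.2.1]
  have hres (a : Bool) : |(armPropensity pi a z.2.1)⁻¹ * (z.1 - m a z.2.1)| ≤ 2 * C / eps := by
    rw [abs_mul, div_eq_inv_mul]
    refine mul_le_mul (abs_inv_armPropensity_le heps hpi a z.2.1) ?_ (abs_nonneg _)
      (inv_nonneg.mpr heps.le)
    linarith [abs_sub z.1 (m a z.2.1), hmC a z.2.1]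
  have hbound : 2 * C / eps + 2 * C = 2 * C * (1 + 1 / eps) := by ring
  rw [aipw_eq, ← hbound]
  rcases z with ⟨y, x, _ | _⟩
  · have h := hres false
    simp only [ipwResidual, armIndicator, if_true, if_false, one_mul, zero_mul, mul_zero,
      zero_sub, sub_zero, Bool.false_eq_true] at h ⊢
    exact (abs_add_le _ _).trans (by rw [abs_neg]; exact add_le_add h hdiff)
  · have h := hres true
    simp only [ipwResidual, armIndicator, if_true, if_false, one_mul, zero_mul, mul_zero,
      sub_zero, Bool.true_eq_false] at h ⊢
    exact (abs_add_le _ _).trans (add_le_add h hdiff)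

end AIPW

theorem ate_hellinger_lipschitz_general
    (ν : Measure (Obs X))
    (CY eps : ℝ) (heps : 0 < eps)
    (P1 P2 : Measure (Obs X)) [IsProbabilityMeasure P1] [IsProbabilityMeasure P2]
    (p1 p2 : Obs X → ℝ)
    (hp1_meas : Measurable p1) (hp2_meas : Measurable p2)
    (hp1_nonneg : ∀ᵐ z ∂ν, 0 ≤ p1 z) (hp2_nonneg : ∀ᵐ z ∂ν, 0 ≤ p2 z)
    (hp1 : IsDensityOf ν P1 p1) (hp2 : IsDensityOf ν P2 p2)
    (hY1 : ∀ᵐ z ∂P1, |z.1| ≤ CY) (hY2 : ∀ᵐ z ∂P2, |z.1| ≤ CY)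
    (μ1f μ2f : Bool → X → ℝ)
    (hμ1 : ∀ a, IsCondMean P1 a (μ1f a)) (hμ2 : ∀ a, IsCondMean P2 a (μ2f a))
    (pi1 pi2 : X → ℝ)
    (hpi1 : IsPropensity P1 pi1) (hpi2 : IsPropensity P2 pi2)
    (hpi1_range : ∀ᵐ z ∂P1, pi1 z.2.1 ∈ Set.Icc eps (1 - eps))
    (hpi2_range : ∀ᵐ z ∂P2, pi2 z.2.1 ∈ Set.Icc eps (1 - eps)) :
    |(∫ z, (μ1f true z.2.1 - μ1f false z.2.1) ∂P1)
        - (∫ z, (μ2f true z.2.1 - μ2f false z.2.1) ∂P2)|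
      ≤ 4 * Real.sqrt 2 * CY * (1 + 1 / eps) * hellingerDist ν p1 p2 := by
  choose m1 hm1 hm1C hm1_eq using fun a =>
    (hμ1 a).exists_bounded ((hμ1 a).ae_abs_le hpi1 heps hpi1_range hY1)
  choose m2 hm2 hm2C hm2_eq using fun a =>
    (hμ2 a).exists_bounded ((hμ2 a).ae_abs_le hpi2 heps hpi2_range hY2)
  obtain ⟨pi, hpi, hpi_range⟩ := hpi2.exists_mem_Icc hpi2_range
  set Φ := aipw (m1 true) (m1 false) pi 0
  have hate1 : ∫ z, (μ1f true z.2.1 - μ1f false z.2.1) ∂P1 = ∫ z, Φ z ∂P1 := by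
    rw [integral_aipw_of_isCondMean hpi.1 heps hpi_range
      (.of_bound measurable_fst.aestronglyMeasurable CY hY1) hm1, sub_zero]
    exact integral_congr_ae <| (hm1_eq true).mp <| (hm1_eq false).mono fun _ hf ht => by
      simp only [ht, hf]
  have hate2 : ∫ z, (μ2f true z.2.1 - μ2f false z.2.1) ∂P2 = ∫ z, Φ z ∂P2 := by
    rw [integral_aipw_of_isPropensity hpi heps hpi_range
      (.of_bound measurable_fst.aestronglyMeasurable CY hY2) hm2 hm2C (fun a => (hm1 a).1) hm1C,
      sub_zero]
    exact integral_congr_ae <| (hm2_eq true).mp <| (hm2_eq false).mono fun _ hf ht => by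
      simp only [ht, hf]
  rw [hate1, hate2]
  calc _ ≤ 2 * √2 * (2 * CY * (1 + 1 / eps)) * hellingerDist ν p1 p2 :=
        abs_integral_sub_integral_le_hellingerDist hp1 hp2 hp1_meas hp2_meas hp1_nonneg
          hp2_nonneg (measurable_aipw (hm1 true).1 (hm1 false).1 hpi.1 0)
          (hY1.mono fun _ hz => abs_aipw_le heps hpi_range hm1C hz)
          (hY2.mono fun _ hz => abs_aipw_le heps hpi_range hm1C hz)
    _ = _ := by ring

theorem ate_hellinger_lipschitz
    (ν : Measure (Obs X)) [SigmaFinite ν]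
    (CY eps : ℝ) (heps : 0 < eps)
    (P1 P2 : Measure (Obs X)) [IsProbabilityMeasure P1] [IsProbabilityMeasure P2]
    (p1 p2 : Obs X → ℝ)
    (hp1_meas : Measurable p1) (hp2_meas : Measurable p2)
    (hp1_nonneg : ∀ᵐ z ∂ν, 0 ≤ p1 z) (hp2_nonneg : ∀ᵐ z ∂ν, 0 ≤ p2 z)
    (hp1 : IsDensityOf ν P1 p1) (hp2 : IsDensityOf ν P2 p2)
    (hY1 : ∀ᵐ z ∂P1, |z.1| ≤ CY) (hY2 : ∀ᵐ z ∂P2, |z.1| ≤ CY)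
    (μ1f μ2f : Bool → X → ℝ)
    (hμ1 : ∀ a, IsCondMean P1 a (μ1f a)) (hμ2 : ∀ a, IsCondMean P2 a (μ2f a))
    (pi1 pi2 : X → ℝ)
    (hpi1 : IsPropensity P1 pi1) (hpi2 : IsPropensity P2 pi2)
    (hpi1_range : ∀ᵐ z ∂P1, pi1 z.2.1 ∈ Set.Icc eps (1 - eps))
    (hpi2_range : ∀ᵐ z ∂P2, pi2 z.2.1 ∈ Set.Icc eps (1 - eps)) :
    |(∫ z, (μ1f true z.2.1 - μ1f false z.2.1) ∂P1)
        - (∫ z, (μ2f true z.2.1 - μ2f false z.2.1) ∂P2)|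
      ≤ 4 * Real.sqrt 2 * CY * (1 + 1 / eps) * hellingerDist ν p1 p2 :=
  ate_hellinger_lipschitz_general ν CY eps heps P1 P2 p1 p2 hp1_meas hp2_meas hp1_nonneg hp2_nonneg
    hp1 hp2 hY1 hY2 μ1f μ2f hμ1 hμ2 pi1 pi2 hpi1 hpi2 hpi1_range hpi2_range

end ATE
end
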